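/- For every category 𝒳, the Grothendieck fibration D^𝒳 : Diag°(𝒳) ⥤ Cat is also a Grothendieck opfibration (hence a bifibration) if and only if 𝒳 is cocomplete. -/

import Mathlib

open CategoryTheory

universe v u

namespace DiagPaper

variable (𝒳 : Type u) [Category.{v} 𝒳]

/-- An object of the diagram category `Diag°(𝒳)`: a small category together with a
diagram of that shape in `𝒳`. -/
structure DiagObj : Type (max u (v + 1)) where
  shape : Cat.{v, v}
  diag : shape ⥤ 𝒳

variable {𝒳}

/-- A morphism `(F, φ) : (I, X) ⟶ (J, Y)` in `Diag°(𝒳)`. -/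
structure DiagHom (A B : DiagObj 𝒳) : Type v where
  F : A.shape ⥤ B.shape
  φ : A.diag ⟶ F ⋙ B.diag

theorem DiagHom.ext' {A B : DiagObj 𝒳} {f g : DiagHom A B}
    (hF : f.F = g.F) (hφ : HEq f.φ g.φ) : f = g := by
  cases f; cases g
  dsimp only at hF hφ
  subst hF
  rw [eq_of_heq hφ]

instance : Category (DiagObj 𝒳) where
  Hom := DiagHom
  id A := ⟨𝟭 A.shape, 𝟙 A.diag⟩
  comp f g := ⟨f.F ⋙ g.F, f.φ ≫ Functor.whiskerLeft f.F g.φ⟩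
  id_comp f := DiagHom.ext' (Functor.id_comp _) (by
    apply heq_of_eq
    ext i
    simp)
  comp_id f := DiagHom.ext' (Functor.comp_id _) (by
    apply heq_of_eq
    ext i
    simp)
  assoc f g h := DiagHom.ext' (Functor.assoc _ _ _) (by
    apply heq_of_eq
    ext i
    simp)

@[simp] theorem DiagObj.comp_F {A B C : DiagObj 𝒳} (f : A ⟶ B) (g : B ⟶ C) :
    (f ≫ g).F = f.F ⋙ g.F := rfl

@[simp] theorem DiagObj.comp_φ {A B C : DiagObj 𝒳} (f : A ⟶ B) (g : B ⟶ C) :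
    (f ≫ g).φ = f.φ ≫ Functor.whiskerLeft f.F g.φ := rfl

@[simp] theorem DiagObj.id_F (A : DiagObj 𝒳) : (𝟙 A : DiagHom A A).F = 𝟭 A.shape := rfl

@[simp] theorem DiagObj.id_φ (A : DiagObj 𝒳) : (𝟙 A : DiagHom A A).φ = 𝟙 A.diag := rfl

variable (𝒳)

/-- The forgetful functor `D^𝒳 : Diag°(𝒳) ⥤ Cat`. -/
def Dfunctor : DiagObj 𝒳 ⥤ Cat.{v, v} where
  obj A := A.shape
  map f := f.F.toCatHom



universe v₂ u₂ v₃ u₃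

section Fibrations

variable {E : Type u₂} [Category.{v₂} E] {Bc : Type u₃} [Category.{v₃} Bc]

/-- `f : x ⟶ y` is a `P`-cartesian morphism: every `h : z ⟶ y` together with a
factorization `w` of `P h` through `P f` lifts uniquely. -/
def IsCartesianHom (P : E ⥤ Bc) {x y : E} (f : x ⟶ y) : Prop :=
  ∀ (z : E) (h : z ⟶ y) (w : P.obj z ⟶ P.obj x),
    w ≫ P.map f = P.map h → ∃! t : z ⟶ x, t ≫ f = h ∧ P.map t = w

/-- `P` is a (cloven) Grothendieck fibration: every `u : a ⟶ P y` admits a `P`-cartesian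
lift at `y`. -/
def IsGFibration (P : E ⥤ Bc) : Prop :=
  ∀ (y : E) (a : Bc) (u : a ⟶ P.obj y),
    ∃ (x : E) (f : x ⟶ y) (hx : P.obj x = a),
      IsCartesianHom P f ∧ P.map f = eqToHom hx ≫ u

end Fibrations

/-! ### Auxiliary lemmas -/

/-- Extract the (heterogeneous) equality of the `φ` components from an equality
of `DiagHom`s. -/
theorem DiagHom.φ_heq {A B : DiagObj 𝒳} {F₁ F₂ : A.shape ⥤ B.shape}
    {φ₁ : A.diag ⟶ F₁ ⋙ B.diag} {φ₂ : A.diag ⟶ F₂ ⋙ B.diag}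
    (h : (⟨F₁, φ₁⟩ : DiagHom A B) = ⟨F₂, φ₂⟩) : HEq φ₁ φ₂ := by
  injection h

theorem isGFibration_Dfunctor : IsGFibration (Dfunctor 𝒳) := by
  rintro ⟨J, Y⟩ I u
  refine ⟨⟨I, u.toFunctor ⋙ Y⟩, ⟨u.toFunctor, 𝟙 _⟩, rfl, ?_, by exact (Category.id_comp u).symm⟩
  rintro ⟨K, Z⟩ ⟨H, ψ⟩ w hw
  dsimp [Dfunctor] at hw
  have hw' : w.toFunctor ⋙ u.toFunctor = H := congrArg Cat.Hom.toFunctor hw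
  subst hw'
  refine ⟨⟨w.toFunctor, ψ⟩, ⟨DiagHom.ext' rfl (heq_of_eq ?_), rfl⟩, ?_⟩
  · ext i; simp [DiagObj.comp_φ]; exact Category.comp_id _
  · rintro ⟨tF, tφ⟩ ⟨hcomp, hP⟩
    dsimp [Dfunctor] at hP
    subst hP
    refine DiagHom.ext' rfl (heq_of_eq ?_)
    have hcomp' : (⟨tF ⋙ u.toFunctor, tφ ≫ Functor.whiskerLeft tF (𝟙 _)⟩ : DiagHom ⟨K, Z⟩ ⟨J, Y⟩)
        = ⟨tF ⋙ u.toFunctor, ψ⟩ := hcomp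
    have h2 := eq_of_heq (DiagHom.φ_heq 𝒳 hcomp')
    simpa using h2

/-- The core of the cocartesian lift: the left Kan extension together with its
universal property, phrased in `Diag°(𝒳)` (not yet in the opposite category). -/
theorem cocart_core [Limits.HasColimits 𝒳] {J K : Cat.{v, v}} (G : J ⟶ K) (Y : J ⥤ 𝒳) :
    ∃ (Z : K ⥤ 𝒳) (φ : Y ⟶ G.toFunctor ⋙ Z),
      ∀ (C : DiagObj 𝒳) (h : (⟨J, Y⟩ : DiagObj 𝒳) ⟶ C) (w : K ⥤ C.shape),
        G.toFunctor ⋙ w = DiagHom.F h →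
        ∃! t : (⟨K, Z⟩ : DiagObj 𝒳) ⟶ C,
          (⟨G.toFunctor, φ⟩ : (⟨J, Y⟩ : DiagObj 𝒳) ⟶ ⟨K, Z⟩) ≫ t = h ∧ DiagHom.F t = w := by
  refine ⟨Functor.leftKanExtension G.toFunctor Y, Functor.leftKanExtensionUnit G.toFunctor Y, ?_⟩
  rintro ⟨L, W⟩ ⟨H, ψ⟩ w hw
  dsimp at hw
  subst hw
  refine ⟨⟨w, (Functor.leftKanExtension G.toFunctor Y).descOfIsLeftKanExtension
      (Functor.leftKanExtensionUnit G.toFunctor Y) ((w : (K : Type v) ⥤ L) ⋙ W) ψ⟩,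
    ⟨DiagHom.ext' rfl (heq_of_eq ?_), rfl⟩, ?_⟩
  · exact (Functor.leftKanExtension G.toFunctor Y).descOfIsLeftKanExtension_fac
      (Functor.leftKanExtensionUnit G.toFunctor Y) ((w : (K : Type v) ⥤ L) ⋙ W) ψ
  · rintro ⟨tF, tφ⟩ ⟨hcomp, hP⟩
    dsimp at hP
    subst hP
    refine DiagHom.ext' rfl (heq_of_eq ?_)
    have hcomp' : (⟨G.toFunctor ⋙ tF,
        Functor.leftKanExtensionUnit G.toFunctor Y ≫ Functor.whiskerLeft G.toFunctor tφ⟩ :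
          DiagHom ⟨J, Y⟩ ⟨L, W⟩) = ⟨G.toFunctor ⋙ tF, ψ⟩ := hcomp
    have h2 := eq_of_heq (DiagHom.φ_heq 𝒳 hcomp')
    refine (Functor.leftKanExtension G.toFunctor Y).hom_ext_of_isLeftKanExtension
      (Functor.leftKanExtensionUnit G.toFunctor Y) _ _ ?_
    rw [h2]
    exact ((Functor.leftKanExtension G.toFunctor Y).descOfIsLeftKanExtension_fac
      (Functor.leftKanExtensionUnit G.toFunctor Y) ((tF : _ ⥤ L) ⋙ W) ψ).symm

theorem isGFibration_op_of_hasColimits [Limits.HasColimits 𝒳] :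
    IsGFibration (Dfunctor 𝒳).op := by
  intro y a u
  obtain ⟨A⟩ := y
  obtain ⟨K⟩ := a
  obtain ⟨J, Y⟩ := A
  obtain ⟨Z, φ, hcore⟩ := cocart_core 𝒳 (u.unop : J ⟶ K) Y
  refine ⟨Opposite.op ⟨K, Z⟩,
    Quiver.Hom.op (⟨u.unop.toFunctor, φ⟩ : (⟨J, Y⟩ : DiagObj 𝒳) ⟶ ⟨K, Z⟩), rfl, ?_, ?_⟩
  · intro z h w hw
    obtain ⟨C⟩ := z
    have hw' : u.unop.toFunctor ⋙ w.unop.toFunctor = DiagHom.F h.unop :=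
      congrArg (fun x => x.unop.toFunctor) hw
    obtain ⟨t, ⟨ht1, ht2⟩, htu⟩ := hcore C h.unop w.unop.toFunctor hw'
    refine ⟨t.op, ⟨congrArg Quiver.Hom.op ht1,
      congrArg (fun (F : ↑K ⥤ ↑C.shape) => Quiver.Hom.op F.toCatHom) ht2⟩, ?_⟩
    rintro s ⟨hs1, hs2⟩
    exact congrArg Quiver.Hom.op
      (htu s.unop ⟨congrArg Quiver.Hom.unop hs1, congrArg (fun x => x.unop.toFunctor) hs2⟩)
  · simp only [eqToHom_refl, Category.id_comp]
    rfl

theorem hasColimits_of_isGFibration_op (hop : IsGFibration (Dfunctor 𝒳).op) :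
    Limits.HasColimits 𝒳 := by
  constructor
  intro J hJ
  constructor
  intro X
  obtain ⟨x, f, hx, hcart, -⟩ :=
    hop (Opposite.op ⟨Cat.of J, X⟩) (Opposite.op (Cat.of (Discrete PUnit.{v + 1})))
      (Quiver.Hom.op (Functor.star J).toCatHom)
  obtain ⟨⟨K, Z⟩⟩ := x
  have hK : K = Cat.of (Discrete PUnit.{v + 1}) := congrArg Opposite.unop hx
  subst hK
  haveI hss : ∀ (a b : (Cat.of (Discrete PUnit.{v + 1}) : Cat.{v, v})),
      Subsingleton (a ⟶ b) := fun a b => Discrete.instSubsingletonDiscreteHom a b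
  let F₀ : ↑(Cat.of J) ⥤ ↑(Cat.of (Discrete PUnit.{v + 1})) := DiagHom.F f.unop
  -- the candidate colimit cocone
  let c : Limits.Cocone X :=
    { pt := Z.obj ⟨⟨⟩⟩
      ι :=
        { app := fun j => (DiagHom.φ f.unop).app j
          naturality := fun j j' σ => by
            have hn := (DiagHom.φ f.unop).naturality σ
            have h1 : F₀.map σ = 𝟙 (⟨⟨⟩⟩ : Discrete PUnit.{v + 1}) :=
              Subsingleton.elim _ _
            have h2 : Z.map (F₀.map σ) = 𝟙 (Z.obj ⟨⟨⟩⟩) := by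
              rw [h1]; exact Z.map_id ⟨⟨⟩⟩
            simp only [Functor.comp_map] at hn
            dsimp
            refine hn.trans ?_
            change _ ≫ Z.map (F₀.map σ) = _
            exact congrArg (fun x => (DiagHom.φ f.unop).app j ≫ x) h2 } }
  have key : ∀ s : Limits.Cocone X,
      ∃! m : Z.obj ⟨⟨⟩⟩ ⟶ s.pt, ∀ j, (DiagHom.φ f.unop).app j ≫ m = s.ι.app j := by
    intro s
    let Wc : (Cat.of (Discrete PUnit.{v + 1}) : Cat) ⥤ 𝒳 := (Functor.const _).obj s.pt
    let ψ : X ⟶ (F₀ : (Cat.of J : Type v) ⥤ _) ⋙ Wc :=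
      { app := fun j => s.ι.app j
        naturality := fun j j' σ => by
          dsimp [Wc]
          refine Eq.trans ?_ (Category.comp_id (s.ι.app j)).symm
          exact s.w σ }
    let hmor : (⟨Cat.of J, X⟩ : DiagObj 𝒳) ⟶ ⟨Cat.of (Discrete PUnit.{v + 1}), Wc⟩ :=
      ⟨F₀, ψ⟩
    have hcond0 : Quiver.Hom.op (𝟙 (Cat.of (Discrete PUnit.{v + 1}))) ≫
        (Dfunctor 𝒳).op.map f = (Dfunctor 𝒳).op.map (Quiver.Hom.op hmor) := by
      apply Quiver.Hom.unop_inj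
      show F₀.toCatHom ≫ 𝟙 (Cat.of (Discrete PUnit.{v + 1})) = F₀.toCatHom
      exact Category.comp_id _
    obtain ⟨t, ⟨ht1, ht2⟩, htu⟩ := hcart
      (Opposite.op ⟨Cat.of (Discrete PUnit.{v + 1}), Wc⟩)
      (Quiver.Hom.op hmor)
      (Quiver.Hom.op (𝟙 (Cat.of (Discrete PUnit.{v + 1}))))
      hcond0
    have hcomp : (⟨F₀ ⋙ DiagHom.F t.unop,
        DiagHom.φ f.unop ≫ Functor.whiskerLeft (F₀ : (Cat.of J : Type v) ⥤ _) (DiagHom.φ t.unop)⟩ :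
          DiagHom ⟨Cat.of J, X⟩ ⟨Cat.of (Discrete PUnit.{v + 1}), Wc⟩)
        = ⟨F₀, ψ⟩ := congrArg Quiver.Hom.unop ht1
    have hφh := DiagHom.φ_heq 𝒳 hcomp
    have h2 := eq_of_heq hφh
    refine ⟨(DiagHom.φ t.unop).app ⟨⟨⟩⟩, fun j => ?_, fun m' hm' => ?_⟩
    · exact NatTrans.congr_app h2 j
    · -- uniqueness
      let η : Z ⟶ (𝟙 (Cat.of (Discrete PUnit.{v + 1})) :
            Cat.of (Discrete PUnit.{v + 1}) ⟶ _).toFunctor ⋙ Wc :=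
        { app := fun k => m'
          naturality := fun k k' σ => by
            rcases k with ⟨⟨⟩⟩
            rcases k' with ⟨⟨⟩⟩
            have hσ : σ = 𝟙 (⟨⟨⟩⟩ : Discrete PUnit.{v + 1}) := (hss _ _).elim _ _
            rw [hσ]
            have h3 : Z.map (𝟙 (⟨⟨⟩⟩ : Discrete PUnit.{v + 1})) = 𝟙 (Z.obj ⟨⟨⟩⟩) :=
              Z.map_id ⟨⟨⟩⟩
            rw [h3]
            dsimp [Wc]
            simp
            exact (Category.comp_id m').symm }
      let tcand : (⟨Cat.of (Discrete PUnit.{v + 1}), Z⟩ : DiagObj 𝒳) ⟶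
          ⟨Cat.of (Discrete PUnit.{v + 1}), Wc⟩ :=
        ⟨𝟭 _, η⟩
      have hcond1 : Quiver.Hom.op tcand ≫ f = Quiver.Hom.op hmor := by
        refine congrArg Quiver.Hom.op (DiagHom.ext' (Functor.comp_id _) (heq_of_eq ?_))
        ext j
        exact hm' j
      have ht₂ := htu (Quiver.Hom.op tcand) ⟨hcond1, rfl⟩
      have h5 : HEq (DiagHom.φ ((Quiver.Hom.op tcand).unop)) (DiagHom.φ t.unop) := by
        rw [ht₂]
      exact NatTrans.congr_app (eq_of_heq h5) ⟨⟨⟩⟩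
  exact Limits.HasColimit.mk ⟨c,
    { desc := fun s => (key s).choose
      fac := fun s j => (key s).choose_spec.1 j
      uniq := fun s m hm => (key s).choose_spec.2 m hm }⟩

/-- **Peschke–Tholen, Proposition 2.4.**  The Grothendieck fibration
`D^𝒳 : Diag°(𝒳) ⥤ Cat` is also a Grothendieck opfibration (hence a bifibration)
if and only if the category `𝒳` is cocomplete. -/
theorem Dfunctor_bifibration_iff_cocomplete (𝒳 : Type u) [Category.{v} 𝒳] :
    (IsGFibration (Dfunctor 𝒳) ∧ IsGFibration (Dfunctor 𝒳).op) ↔ Limits.HasColimits 𝒳 := by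
  constructor
  · rintro ⟨-, hop⟩
    exact hasColimits_of_isGFibration_op 𝒳 hop
  · intro h
    exact ⟨isGFibration_Dfunctor 𝒳, isGFibration_op_of_hasColimits 𝒳⟩

end DiagPaper
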